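/- arXiv:2605.16044 — 2 statements merged into one kernel-verified Lean document; each statement's English description precedes it below -/
import Mathlib

section
/- Let d, m ≥ 1 and let h : Fin d → Fin m be a random hash function whose values h(k) are independent and uniformly distributed on Fin m, and let σ : Fin d → {−1, +1} be a random sign function whose values σ(k) are independent, uniform on {−1,+1}, and independent of h. For y, y' ∈ ℝ^d define the count-sketch inner-product estimator ⟨Sy, Sy'⟩ = Σ_{j=1}^{m} (Σ_{k=1}^{d} σ(k) y_k 𝟙[h(k)=j]) · (Σ_{k=1}^{d} σ(k) y'_k 𝟙[h(k)=j]). Then the estimator is unbiased: E[⟨Sy, Sy'⟩] = ⟨y, y'⟩ = Σ_{k=1}^{d} y_k y'_k. -/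
open Finset

/-- The random sign `σ(k) ∈ {−1,+1}` induced by a Boolean coin `s k`. -/
def sketchSign {d : ℕ} (s : Fin d → Bool) (k : Fin d) : ℝ :=
  if s k then 1 else -1

/-- `j`-th coordinate of the count-sketch `Sy`: `(Sy)_j = Σ_k σ(k) y_k 𝟙[h(k)=j]`. -/
def sketchCoord {d m : ℕ} (h : Fin d → Fin m) (s : Fin d → Bool)
    (y : Fin d → ℝ) (j : Fin m) : ℝ :=
  ∑ k, if h k = j then sketchSign s k * y k else 0

/-- The count-sketch inner-product estimator `⟨Sy, Sy'⟩`, as a function of the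
sample point `ω = (h, σ)` drawn uniformly from all (hash, sign) pairs; the uniform
distribution on this product space makes the values `h(k)` independent and uniform
on `Fin m`, the signs `σ(k)` independent and uniform on `{±1}`, and `h` independent
of `σ`. -/
def sketchEstimator {d m : ℕ} (ω : (Fin d → Fin m) × (Fin d → Bool))
    (y y' : Fin d → ℝ) : ℝ :=
  ∑ j, sketchCoord ω.1 ω.2 y j * sketchCoord ω.1 ω.2 y' j

lemma sign_sq {d : ℕ} (s : Fin d → Bool) (k : Fin d) :
    sketchSign s k * sketchSign s k = 1 := by
  unfold sketchSign; split <;> ring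

lemma sum_sign_ne {d : ℕ} {k l : Fin d} (hkl : k ≠ l) :
    ∑ s : Fin d → Bool, sketchSign s k * sketchSign s l = 0 := by
  apply Finset.sum_ninvolution (fun s => Function.update s k (!s k))
  · intro s
    have h1 : sketchSign (Function.update s k (!s k)) k = - sketchSign s k := by
      unfold sketchSign; simp only [Function.update_self]; cases s k <;> simp
    have h2 : sketchSign (Function.update s k (!s k)) l = sketchSign s l := by
      unfold sketchSign; rw [Function.update_of_ne (Ne.symm hkl)]
    rw [h1, h2]; ring
  · intro s _ h
    have := congrFun h k
    simp [Function.update_self] at this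
  · intro s; exact Finset.mem_univ _
  · intro s
    funext x
    by_cases hx : x = k
    · subst hx; simp [Function.update_self]
    · simp [Function.update_of_ne hx]

lemma est_expand {d m : ℕ} (h : Fin d → Fin m) (s : Fin d → Bool)
    (y y' : Fin d → ℝ) :
    sketchEstimator (h, s) y y'
      = ∑ k, ∑ l, if h k = h l then
          sketchSign s k * sketchSign s l * (y k * y' l) else 0 := by
  unfold sketchEstimator sketchCoord
  simp only [Finset.sum_mul_sum]
  rw [Finset.sum_comm]
  refine Finset.sum_congr rfl fun k _ => ?_
  rw [Finset.sum_comm]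
  refine Finset.sum_congr rfl fun l _ => ?_
  simp only [ite_mul, mul_ite, zero_mul, mul_zero]
  rw [Finset.sum_ite_eq Finset.univ (h l)
    (fun j => if h k = j then sketchSign s k * y k * (sketchSign s l * y' l) else 0)]
  simp only [Finset.mem_univ, if_true]
  by_cases hh : h k = h l
  · rw [if_pos hh, if_pos hh]; ring
  · rw [if_neg hh, if_neg hh]

/-- the count-sketch inner-product estimator is unbiased:
`E[⟨Sy, Sy'⟩] = ⟨y, y'⟩`, the expectation being the uniform average over all
(hash, sign) pairs. -/
theorem countSketch_unbiased (d m : ℕ) (hd : 1 ≤ d) (hm : 1 ≤ m)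
    (y y' : Fin d → ℝ) :
    (∑ ω : (Fin d → Fin m) × (Fin d → Bool), sketchEstimator ω y y')
        / (Fintype.card ((Fin d → Fin m) × (Fin d → Bool)) : ℝ)
      = ∑ k, y k * y' k := by
  have card_pos : (0:ℝ) < (Fintype.card ((Fin d → Fin m) × (Fin d → Bool)) : ℝ) := by
    have : 0 < Fintype.card ((Fin d → Fin m) × (Fin d → Bool)) := by
      apply Fintype.card_pos_iff.mpr
      exact ⟨⟨fun _ => ⟨0, hm⟩, fun _ => true⟩⟩
    exact_mod_cast this
  rw [div_eq_iff (ne_of_gt card_pos)]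
  rw [Fintype.sum_prod_type]
  simp only [est_expand]
  have step : ∀ h : Fin d → Fin m,
      (∑ s : Fin d → Bool, ∑ k, ∑ l, if h k = h l then
        sketchSign s k * sketchSign s l * (y k * y' l) else 0)
      = (2:ℝ)^d * ∑ k, y k * y' k := by
    intro h
    rw [Finset.sum_comm, Finset.mul_sum]
    refine Finset.sum_congr rfl fun k _ => ?_
    rw [Finset.sum_comm]
    have inner : ∀ l : Fin d,
        (∑ s : Fin d → Bool, if h k = h l then
          sketchSign s k * sketchSign s l * (y k * y' l) else 0)
        = if k = l then (2:ℝ)^d * (y k * y' k) else 0 := by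
      intro l
      by_cases hkl : k = l
      · subst hkl
        simp only [if_pos rfl, sign_sq, one_mul]
        rw [Finset.sum_const]
        simp [Fintype.card_fun]
      · rw [if_neg hkl]
        by_cases hh : h k = h l
        · simp only [if_pos hh]
          rw [← Finset.sum_mul, sum_sign_ne hkl, zero_mul]
        · simp [hh]
    simp only [inner]
    rw [Finset.sum_ite_eq Finset.univ k (fun _ => (2:ℝ)^d * (y k * y' k))]
    simp
  simp only [step, Finset.sum_const]
  simp only [Fintype.card_prod, Fintype.card_fun, Fintype.card_fin, Fintype.card_bool,
    Finset.card_univ, nsmul_eq_mul]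
  push_cast
  ring
end

section
/- Let d, m ≥ 1 and let h : Fin d → Fin m be a random hash function whose values h(k) are independent and uniformly distributed on Fin m, and let σ : Fin d → {−1, +1} be a random sign function whose values σ(k) are independent, uniform on {−1,+1}, and independent of h. For y, y' ∈ ℝ^d, the count-sketch inner-product estimator ⟨Sy, Sy'⟩ = Σ_{j=1}^{m} (Σ_{k} σ(k) y_k 𝟙[h(k)=j])(Σ_{k} σ(k) y'_k 𝟙[h(k)=j]) satisfies the variance bound Var(⟨Sy, Sy'⟩) ≤ (1/m) · ( ‖y‖₂² ‖y'‖₂² + ⟨y, y'⟩² ). -/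
open Finset

/-- Expectation with respect to the uniform distribution on all (hash, sign) pairs;
under this distribution the values `h(k)` are independent and uniform on `Fin m`,
the signs `σ(k)` independent and uniform on `{±1}`, and `h` is independent of `σ`. -/
noncomputable def sketchExp {d m : ℕ}
    (f : ((Fin d → Fin m) × (Fin d → Bool)) → ℝ) : ℝ :=
  (∑ ω, f ω) / (Fintype.card ((Fin d → Fin m) × (Fin d → Bool)) : ℝ)

/-!
Expanding, `⟨Sy, Sy'⟩ = Σ_{k,l} 𝟙[h k = h l] σ_k σ_l y_k y'_l`; the diagonal terms sum to the
constant `⟨y, y'⟩`, so the variance is at most the second moment of the off-diagonal part. In that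
second moment the sign average `𝔼[σ_k σ_l σ_k' σ_l']` vanishes unless `(k', l')` is `(k, l)` or
`(l, k)` (flipping a coin that occurs only once negates the summand), and two distinct coordinates
collide with probability `1/m`. What is left is `(1/m) Σ_{k ≠ l} y_k y'_l (y_k y'_l + y_l y'_k)`,
the right-hand side minus the nonnegative diagonal terms `(2/m) Σ_k (y_k y'_k)²`.
-/

open Finset
open scoped BigOperators

lemma Finset.sum_product_self_eq_add_sum_offDiag {ι M : Type*} [DecidableEq ι] [AddCommMonoid M]
    (s : Finset ι) (f : ι × ι → M) :
    ∑ p ∈ s ×ˢ s, f p = ∑ i ∈ s, f (i, i) + ∑ p ∈ s.offDiag, f p := by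
  rw [← diag_union_offDiag, sum_union (disjoint_diag_offDiag s), sum_diag]

lemma Finset.sum_ite_eq_or_swap {ι M : Type*} [DecidableEq ι] [AddCommMonoid M]
    {s : Finset (ι × ι)} {p : ι × ι} (hp : p ∈ s) (hp' : p.swap ∈ s) (hne : p.1 ≠ p.2)
    (g : ι × ι → M) :
    ∑ q ∈ s, (if q = p ∨ q = p.swap then g q else 0) = g p + g p.swap := by
  have hfilter : s.filter (fun q => q = p ∨ q = p.swap) = {p, p.swap} := by
    ext q
    simp only [mem_filter, mem_insert, mem_singleton]
    constructor
    · exact And.right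
    · rintro (rfl | rfl) <;> simp [hp, hp']
  rw [← sum_filter, hfilter, sum_pair fun h => hne (congrArg Prod.fst h)]

section Expectation

variable {ι α β : Type*} [Fintype ι] [Fintype α] [Fintype β]

lemma Fintype.expect_sq_sub_sq_expect_le (f : ι → ℝ) (c : ℝ) :
    𝔼 i, f i ^ 2 - (𝔼 i, f i) ^ 2 ≤ 𝔼 i, (f i - c) ^ 2 := by
  cases isEmpty_or_nonempty ι
  · simp [univ_eq_empty]
  · have hexpand : 𝔼 i, (f i - c) ^ 2 = 𝔼 i, f i ^ 2 - 2 * c * 𝔼 i, f i + c ^ 2 := by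
      simp only [sub_sq, expect_add_distrib, expect_sub_distrib, ← expect_mul, ← mul_expect,
        Fintype.expect_const]
      ring
    nlinarith [sq_nonneg (𝔼 i, f i - c)]

lemma Fintype.expect_fst_mul_snd (f : α → ℝ) (g : β → ℝ) :
    𝔼 ω : α × β, f ω.1 * g ω.2 = (𝔼 a, f a) * 𝔼 b, g b := by
  rw [← univ_product_univ, expect_product, Fintype.expect_mul_expect]

end Expectation

section Collision

variable {ι α : Type*} [DecidableEq α]

def collision (h : ι → α) (p : ι × ι) : ℝ := if h p.1 = h p.2 then 1 else 0

lemma collision_swap (h : ι → α) (p : ι × ι) : collision h p.swap = collision h p := by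
  simp [collision, eq_comm]

lemma collision_mul_self (h : ι → α) (p : ι × ι) :
    collision h p * collision h p = collision h p := by
  unfold collision; split_ifs <;> norm_num

lemma expect_collision [Fintype ι] [DecidableEq ι] [Fintype α] {p : ι × ι} (hp : p.1 ≠ p.2) :
    𝔼 h : ι → α, collision h p = 1 / Fintype.card α := by
  cases isEmpty_or_nonempty α
  · have : IsEmpty (ι → α) := ⟨fun h => isEmptyElim (h p.1)⟩
    simp [univ_eq_empty]
  rw [Fintype.expect_equiv (Equiv.funSplitAt p.2 α) (fun h => collision h p)
    (fun x => if x.2 ⟨p.1, hp⟩ = x.1 then (1 : ℝ) else 0) (fun h => rfl),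
    ← univ_product_univ, expect_product, expect_comm]
  simp

end Collision

section Signs

variable {d : ℕ}

lemma sketchSign_mul_self (s : Fin d → Bool) (k : Fin d) : sketchSign s k * sketchSign s k = 1 := by
  unfold sketchSign; split_ifs <;> norm_num

lemma sketchSign_update_of_ne (s : Fin d → Bool) {i k : Fin d} (hki : k ≠ i) (b : Bool) :
    sketchSign (Function.update s i b) k = sketchSign s k := by
  simp [sketchSign, Function.update_of_ne hki]

lemma sketchSign_update_not (s : Fin d → Bool) (i : Fin d) :
    sketchSign (Function.update s i (!s i)) i = -sketchSign s i := by
  unfold sketchSign; cases s i <;> simp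

lemma expect_sketchSign_mul_eq_zero (i : Fin d) {g : (Fin d → Bool) → ℝ}
    (hg : ∀ s b, g (Function.update s i b) = g s) :
    𝔼 s, sketchSign s i * g s = 0 := by
  have hflip_involutive : Function.Involutive fun s : Fin d → Bool => Function.update s i (!s i) :=
    fun s => by simp
  have hflip := Fintype.expect_bijective _ hflip_involutive.bijective
    (fun s => sketchSign s i * g s) (fun s => -(sketchSign s i * g s))
    (fun s => by simp only [sketchSign_update_not, hg, neg_mul, neg_neg])
  rw [expect_neg_distrib] at hflip
  linarith

def signProduct (s : Fin d → Bool) (p : Fin d × Fin d) : ℝ := sketchSign s p.1 * sketchSign s p.2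

lemma signProduct_mul_self (s : Fin d → Bool) (p : Fin d × Fin d) :
    signProduct s p * signProduct s p = 1 := by
  unfold signProduct
  linear_combination (sketchSign s p.1 * sketchSign s p.1) * sketchSign_mul_self s p.2 +
    sketchSign_mul_self s p.1

lemma signProduct_swap (s : Fin d → Bool) (p : Fin d × Fin d) :
    signProduct s p.swap = signProduct s p :=
  mul_comm _ _

lemma expect_signProduct_mul_eq_zero {p q : Fin d × Fin d} (hp : p.1 ≠ p.2) (h1 : p.1 ≠ q.1)
    (h2 : p.1 ≠ q.2) :
    𝔼 s, signProduct s p * signProduct s q = 0 := by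
  simp_rw [signProduct, mul_assoc]
  exact expect_sketchSign_mul_eq_zero p.1 fun s b => by
    simp [sketchSign_update_of_ne, hp.symm, h1.symm, h2.symm]

lemma expect_signProduct_mul_signProduct {p q : Fin d × Fin d} (hp : p.1 ≠ p.2) (hq : q.1 ≠ q.2) :
    𝔼 s, signProduct s p * signProduct s q = if q = p ∨ q = p.swap then 1 else 0 := by
  split_ifs with hpq
  · have hone : ∀ s, signProduct s p * signProduct s q = 1 := fun s => by
      rcases hpq with hqp | hqp <;> simp [hqp, signProduct_swap, signProduct_mul_self]
    simp [hone]
  · have hlonely : (p.1 ≠ q.1 ∧ p.1 ≠ q.2) ∨ (p.2 ≠ q.1 ∧ p.2 ≠ q.2) := by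
      obtain ⟨p1, p2⟩ := p; obtain ⟨q1, q2⟩ := q
      simp only [Prod.swap_prod_mk, Prod.mk.injEq] at hp hq hpq ⊢
      grind
    rcases hlonely with ⟨h1, h2⟩ | ⟨h1, h2⟩
    · exact expect_signProduct_mul_eq_zero hp h1 h2
    · simp_rw [← signProduct_swap _ p]
      exact expect_signProduct_mul_eq_zero (Ne.symm hp) h1 h2

end Signs

section Estimator

variable {d m : ℕ}

lemma sketchExp_eq_expect (f : (Fin d → Fin m) × (Fin d → Bool) → ℝ) :
    sketchExp f = 𝔼 ω, f ω :=
  (Fintype.expect_eq_sum_div_card f).symm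

lemma sketchEstimator_eq_sum (ω : (Fin d → Fin m) × (Fin d → Bool)) (y y' : Fin d → ℝ) :
    sketchEstimator ω y y' =
      ∑ p : Fin d × Fin d, collision ω.1 p * signProduct ω.2 p * (y p.1 * y' p.2) := by
  simp only [sketchEstimator, sketchCoord, sum_mul_sum, Fintype.sum_prod_type]
  rw [sum_comm]
  refine sum_congr rfl fun k _ => ?_
  rw [sum_comm]
  refine sum_congr rfl fun l _ => ?_
  simp only [collision, signProduct, ite_mul, mul_ite, zero_mul, mul_zero, sum_ite_eq,
    mem_univ, if_true]
  split_ifs <;> ring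

lemma sketchEstimator_sub_inner (ω : (Fin d → Fin m) × (Fin d → Bool)) (y y' : Fin d → ℝ) :
    sketchEstimator ω y y' - ∑ k, y k * y' k =
      ∑ p ∈ univ.offDiag, collision ω.1 p * signProduct ω.2 p * (y p.1 * y' p.2) := by
  rw [sketchEstimator_eq_sum, ← univ_product_univ, sum_product_self_eq_add_sum_offDiag]
  simp [collision, signProduct, sketchSign_mul_self]

lemma expect_collision_signProduct_mul {p q : Fin d × Fin d} (hp : p.1 ≠ p.2) (hq : q.1 ≠ q.2)
    (a b : ℝ) :
    𝔼 ω : (Fin d → Fin m) × (Fin d → Bool),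
        collision ω.1 p * signProduct ω.2 p * a * (collision ω.1 q * signProduct ω.2 q * b) =
      if q = p ∨ q = p.swap then a * b / m else 0 := by
  have hsplit : ∀ ω : (Fin d → Fin m) × (Fin d → Bool),
      collision ω.1 p * signProduct ω.2 p * a * (collision ω.1 q * signProduct ω.2 q * b) =
        a * b * (collision ω.1 p * collision ω.1 q * (signProduct ω.2 p * signProduct ω.2 q)) :=
    fun ω => by ring
  simp_rw [hsplit, ← mul_expect]
  rw [Fintype.expect_fst_mul_snd (fun h => collision h p * collision h q)
    (fun s => signProduct s p * signProduct s q), expect_signProduct_mul_signProduct hp hq]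
  split_ifs with hpq
  · have hcollide : ∀ h : Fin d → Fin m, collision h p * collision h q = collision h p := by
      intro h
      rcases hpq with rfl | rfl <;> simp [collision_swap, collision_mul_self]
    simp [hcollide, expect_collision hp, div_eq_mul_inv]
  · simp

lemma expect_sq_sketchEstimator_sub_inner (y y' : Fin d → ℝ) :
    𝔼 ω : (Fin d → Fin m) × (Fin d → Bool), (sketchEstimator ω y y' - ∑ k, y k * y' k) ^ 2 =
      1 / m * ∑ p ∈ univ.offDiag, y p.1 * y' p.2 * (y p.1 * y' p.2 + y p.2 * y' p.1) := by
  simp_rw [sketchEstimator_sub_inner, sq, sum_mul_sum, expect_sum_comm, mul_sum]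
  refine sum_congr rfl fun p hp => ?_
  have hp' : p.1 ≠ p.2 := (mem_offDiag.mp hp).2.2
  have hswap : p.swap ∈ univ.offDiag := by simpa using hp'.symm
  rw [sum_congr rfl fun q hq => expect_collision_signProduct_mul hp' (mem_offDiag.mp hq).2.2 _ _,
    sum_ite_eq_or_swap hp hswap hp']
  simp only [Prod.fst_swap, Prod.snd_swap]
  ring

end Estimator

lemma sum_offDiag_mul_add_swap_le {ι : Type*} [Fintype ι] [DecidableEq ι] (y y' : ι → ℝ) :
    ∑ p ∈ univ.offDiag, y p.1 * y' p.2 * (y p.1 * y' p.2 + y p.2 * y' p.1) ≤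
      (∑ k, y k ^ 2) * (∑ k, y' k ^ 2) + (∑ k, y k * y' k) ^ 2 := by
  have hfull : ∑ p ∈ univ ×ˢ univ, y p.1 * y' p.2 * (y p.1 * y' p.2 + y p.2 * y' p.1) =
      (∑ k, y k ^ 2) * (∑ k, y' k ^ 2) + (∑ k, y k * y' k) ^ 2 := by
    rw [sq, sum_mul_sum, sum_mul_sum, ← sum_add_distrib, sum_product]
    refine sum_congr rfl fun k _ => ?_
    rw [← sum_add_distrib]
    exact sum_congr rfl fun l _ => by ring
  rw [← hfull, sum_product_self_eq_add_sum_offDiag]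
  exact le_add_of_nonneg_left <| sum_nonneg fun k _ => by nlinarith [sq_nonneg (y k * y' k)]

theorem countSketch_variance_general (d m : ℕ)
    (y y' : Fin d → ℝ) :
    sketchExp (m := m) (fun ω => (sketchEstimator ω y y') ^ 2)
        - (sketchExp (m := m) (fun ω => sketchEstimator ω y y')) ^ 2
      ≤ (1 / (m : ℝ)) *
          ((∑ k, (y k) ^ 2) * (∑ k, (y' k) ^ 2) + (∑ k, y k * y' k) ^ 2) := by
  simp only [sketchExp_eq_expect]
  calc _ ≤ 𝔼 ω : (Fin d → Fin m) × (Fin d → Bool),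
          (sketchEstimator ω y y' - ∑ k, y k * y' k) ^ 2 :=
        Fintype.expect_sq_sub_sq_expect_le _ _
    _ = 1 / m * ∑ p ∈ univ.offDiag, y p.1 * y' p.2 * (y p.1 * y' p.2 + y p.2 * y' p.1) :=
        expect_sq_sketchEstimator_sub_inner y y'
    _ ≤ _ := mul_le_mul_of_nonneg_left (sum_offDiag_mul_add_swap_le y y') (by positivity)

/-- the count-sketch inner-product estimator satisfies the variance bound
`Var(⟨Sy, Sy'⟩) ≤ (1/m) (‖y‖₂²‖y'‖₂² + ⟨y, y'⟩²)`. -/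
theorem countSketch_variance (d m : ℕ) (hd : 1 ≤ d) (hm : 1 ≤ m)
    (y y' : Fin d → ℝ) :
    sketchExp (m := m) (fun ω => (sketchEstimator ω y y') ^ 2)
        - (sketchExp (m := m) (fun ω => sketchEstimator ω y y')) ^ 2
      ≤ (1 / (m : ℝ)) *
          ((∑ k, (y k) ^ 2) * (∑ k, (y' k) ^ 2) + (∑ k, y k * y' k) ^ 2) :=
  countSketch_variance_general d m y y'
end
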